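/- Dimension independence of the cohesion radius: the swarm size bound ε = (b/a)·√(c/2)·exp(−1/2) from Theorem 1 depends only on the model parameters a, b, c and not on the dimension n of the state space nor (for M large) on the number M of swarm members; formally, for every n ≥ 1 and every M ≥ 2, under Assumption 1 and the coefficient condition a − (a² + b²Φ²)M²/(2(M−1)) > 0 with Φ = a/b, every trajectory of the model x_i(k+1) = x_i(k) + Σ_{j≠i} g(x_i(k) − x_j(k)) in ℝⁿ satisfies: for each i there exists k with ‖x_i(k) − x̄‖ ≤ (b/a)·√(c/2)·exp(−1/2). -/

import Mathlib

/-- Attraction–repulsion function `g(y) = −y(a − b·exp(−‖y‖²/c))` on ℝⁿ. -/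
noncomputable def g (a b c : ℝ) {n : ℕ} (y : EuclideanSpace ℝ (Fin n)) :
    EuclideanSpace ℝ (Fin n) :=
  (-(a - b * Real.exp (-‖y‖ ^ 2 / c))) • y

/-!
Summing the update over all agents, the contributions of `g` cancel in pairs because `g` is odd,
so the centre `x̄` never moves. Split `g(y) = -a y + b e^{-‖y‖²/c} y`: the linear part
contracts `x_i - x̄` by the factor `1 - aM` (the coefficient condition gives `aM < 1`), while each
of the `M - 1` repulsive terms has norm at most `b max_t t e^{-t²/c} = b √(c/2) e^{-1/2} = a ε`.
Hence as long as `‖x_i(k) - x̄‖ > ε`, the distance drops by at least `a ε` per step, which cannot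
go on forever.
-/

open Finset Real

lemma mul_exp_neg_sq_div_le {c : ℝ} (hc : 0 < c) (t : ℝ) :
    t * exp (-t ^ 2 / c) ≤ √(c / 2) * exp (-(1 / 2)) := by
  set s := √(c / 2)
  have hs : 0 < s := sqrt_pos.mpr (by positivity)
  have hc_eq : c = 2 * s ^ 2 := by rw [sq_sqrt (by positivity)]; ring
  -- `1 + u ≤ e^u` at `u = t²/c - 1/2`, after which `t ≤ s (t²/c + 1/2)` is AM-GM.
  have hamgm : t ≤ s * (t ^ 2 / c - 1 / 2 + 1) := by
    rw [hc_eq, ← sub_nonneg]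
    field_simp
    nlinarith [sq_nonneg (t - s)]
  calc t * exp (-t ^ 2 / c)
      ≤ s * exp (t ^ 2 / c - 1 / 2) * exp (-t ^ 2 / c) := by
        gcongr
        exact hamgm.trans (mul_le_mul_of_nonneg_left (add_one_le_exp _) hs.le)
    _ = s * exp (-(1 / 2)) := by rw [mul_assoc, ← exp_add]; ring_nf

lemma norm_exp_neg_sq_div_smul_le {E : Type*} [NormedAddCommGroup E] [NormedSpace ℝ E]
    {b c : ℝ} (hb : 0 ≤ b) (hc : 0 < c) (y : E) :
    ‖(b * exp (-‖y‖ ^ 2 / c)) • y‖ ≤ b * √(c / 2) * exp (-(1 / 2)) := by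
  rw [norm_smul, Real.norm_of_nonneg (by positivity), mul_assoc, mul_assoc, mul_comm (exp _)]
  exact mul_le_mul_of_nonneg_left (mul_exp_neg_sq_div_le hc ‖y‖) hb

lemma sum_sum_odd_sub_eq_zero {ι E F : Type*} [Fintype ι] [AddCommGroup E] [AddCommGroup F]
    [IsAddTorsionFree F] {f : E → F} (hf : ∀ y, f (-y) = -f y) (x : ι → E) :
    ∑ i, ∑ j, f (x i - x j) = 0 := by
  refine self_eq_neg.mp ?_
  calc ∑ i, ∑ j, f (x i - x j) = ∑ i, ∑ j, f (x j - x i) := sum_comm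
    _ = -∑ i, ∑ j, f (x i - x j) := by simp only [← sum_neg_distrib, ← hf, neg_sub]

lemma exists_le_of_le_one_sub_mul_add {u : ℕ → ℝ} {q p ε : ℝ} (hq : 0 < q) (hp : p < q * ε)
    (hu : ∀ k, 0 ≤ u k) (hrec : ∀ k, u (k + 1) ≤ (1 - q) * u k + p) : ∃ k, u k ≤ ε := by
  by_contra! hfar
  have hdrop : ∀ k, u k ≤ u 0 - k * (q * ε - p) := by
    intro k
    induction k with
    | zero => simp
    | succ k ih =>
      push_cast
      linarith [hrec k, mul_lt_mul_of_pos_left (hfar k) hq]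
  obtain ⟨k, hk⟩ := exists_nat_gt (u 0 / (q * ε - p))
  rw [div_lt_iff₀ (by linarith)] at hk
  linarith [hdrop k, hu k]

section SwarmCenter

variable {ι E : Type*} [Fintype ι] [AddCommGroup E] [Module ℝ E]

noncomputable def swarmCenter (x : ι → E) : E := (Fintype.card ι : ℝ)⁻¹ • ∑ j, x j

lemma sum_sub_eq_card_smul_sub_swarmCenter [Nonempty ι] (x : ι → E) (i : ι) :
    ∑ j, (x i - x j) = (Fintype.card ι : ℝ) • (x i - swarmCenter x) := by
  rw [swarmCenter, smul_sub, smul_inv_smul₀ (by positivity), sum_sub_distrib, sum_const, card_univ,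
    Nat.cast_smul_eq_nsmul]

end SwarmCenter

lemma g_neg (a b c : ℝ) {n : ℕ} (y : EuclideanSpace ℝ (Fin n)) : g a b c (-y) = -g a b c y := by
  simp [g]

lemma g_eq_exp_smul_sub (a b c : ℝ) {n : ℕ} (y : EuclideanSpace ℝ (Fin n)) :
    g a b c y = (b * exp (-‖y‖ ^ 2 / c)) • y - a • y := by
  rw [g, ← sub_smul]; congr 1; ring

section SwarmStep

variable {ι : Type*} [Fintype ι] [DecidableEq ι] {n : ℕ}

noncomputable def swarmStep (a b c : ℝ) (x : ι → EuclideanSpace ℝ (Fin n)) :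
    ι → EuclideanSpace ℝ (Fin n) :=
  fun i ↦ x i + ∑ j ∈ univ.erase i, g a b c (x i - x j)

lemma swarmStep_eq_add_sum (a b c : ℝ) (x : ι → EuclideanSpace ℝ (Fin n)) (i : ι) :
    swarmStep a b c x i = x i + ∑ j, g a b c (x i - x j) := by
  rw [swarmStep, sum_erase _ (by simp [g])]

lemma swarmCenter_swarmStep (a b c : ℝ) (x : ι → EuclideanSpace ℝ (Fin n)) :
    swarmCenter (swarmStep a b c x) = swarmCenter x := by
  have : IsAddTorsionFree (EuclideanSpace ℝ (Fin n)) := .of_module_rat _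
  simp only [swarmCenter, swarmStep_eq_add_sum, sum_add_distrib]
  rw [sum_sum_odd_sub_eq_zero (g_neg a b c), add_zero]

lemma norm_swarmStep_sub_swarmCenter_le {a b c : ℝ} (hb : 0 ≤ b) (hc : 0 < c)
    (haι : a * Fintype.card ι ≤ 1) (x : ι → EuclideanSpace ℝ (Fin n)) (i : ι) :
    ‖swarmStep a b c x i - swarmCenter x‖ ≤
      (1 - a * Fintype.card ι) * ‖x i - swarmCenter x‖ +
        (Fintype.card ι - 1) * (b * √(c / 2) * exp (-(1 / 2))) := by
  have : Nonempty ι := ⟨i⟩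
  set r : ι → EuclideanSpace ℝ (Fin n) := fun j ↦ (b * exp (-‖x i - x j‖ ^ 2 / c)) • (x i - x j)
  have hsplit : swarmStep a b c x i - swarmCenter x =
      (1 - a * Fintype.card ι) • (x i - swarmCenter x) + ∑ j ∈ univ.erase i, r j := by
    rw [swarmStep_eq_add_sum, sum_erase _ (by simp [r])]
    simp only [g_eq_exp_smul_sub]
    rw [sum_sub_distrib, ← smul_sum, sum_sub_eq_card_smul_sub_swarmCenter, smul_smul, sub_smul,
      one_smul]
    abel
  have hcard : ((univ.erase i).card : ℝ) = Fintype.card ι - 1 := by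
    rw [card_erase_of_mem (mem_univ i), card_univ, Nat.cast_pred Fintype.card_pos]
  rw [hsplit]
  refine (norm_add_le _ _).trans (add_le_add ?_ ?_)
  · rw [norm_smul, Real.norm_of_nonneg (by linarith)]
  · calc ‖∑ j ∈ univ.erase i, r j‖ ≤ ∑ j ∈ univ.erase i, ‖r j‖ := norm_sum_le _ _
      _ ≤ ∑ _j ∈ univ.erase i, b * √(c / 2) * exp (-(1 / 2)) :=
          sum_le_sum fun j _ ↦ norm_exp_neg_sq_div_smul_le hb hc _
      _ = _ := by rw [sum_const, nsmul_eq_mul, hcard]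

end SwarmStep

lemma mul_lt_one_of_coefficient_condition {a b M : ℝ} (ha : 0 < a) (hb : b ≠ 0) (hM : 1 < M)
    (h : 0 < a - (a ^ 2 + b ^ 2 * (a / b) ^ 2) * M ^ 2 / (2 * (M - 1))) : a * M < 1 := by
  have hsimp : (a ^ 2 + b ^ 2 * (a / b) ^ 2) * M ^ 2 / (2 * (M - 1)) = a ^ 2 * M ^ 2 / (M - 1) := by
    field_simp
    ring
  rw [hsimp, sub_pos, div_lt_iff₀ (by linarith)] at h
  nlinarith

theorem cohesion_radius_dimension_independent_general (a b c : ℝ)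
    (ha : 0 < a) (hb : 0 < b) (hc : 0 < c) :
    ∀ n : ℕ, 1 ≤ n → ∀ M : ℕ, 2 ≤ M →
    ∀ x : ℕ → Fin M → EuclideanSpace ℝ (Fin n),
    (∀ k i, x (k + 1) i =
      x k i + ∑ j ∈ Finset.univ.erase i, g a b c (x k i - x k j)) →
    (∀ (k : ℕ) (i j : Fin M), i ≠ j →
      Real.sqrt (c * Real.log (b / a)) < ‖x k i - x k j‖) →
    0 < a - (a ^ 2 + b ^ 2 * (a / b) ^ 2) * (M : ℝ) ^ 2 / (2 * ((M : ℝ) - 1)) →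
    ∀ i : Fin M, ∃ k : ℕ,
      ‖x k i - (M : ℝ)⁻¹ • ∑ j, x 0 j‖ ≤
        b / a * Real.sqrt (c / 2) * Real.exp (-(1 / 2 : ℝ)) := by
  intro n _ M hM x hdyn _ hcoef i
  have hstep : ∀ k, x (k + 1) = swarmStep a b c (x k) := fun k ↦ funext (hdyn k)
  have hcenter : ∀ k, swarmCenter (x k) = swarmCenter (x 0) := by
    intro k
    induction k with
    | zero => rfl
    | succ k ih => rw [hstep, swarmCenter_swarmStep, ih]
  have haM : a * M < 1 :=
    mul_lt_one_of_coefficient_condition ha hb.ne' (by exact_mod_cast hM) hcoef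
  have hrec (k : ℕ) := norm_swarmStep_sub_swarmCenter_le hb.le hc (by simpa using haM.le) (x k) i
  simp only [← hstep, hcenter, Fintype.card_fin] at hrec
  have hp : ((M : ℝ) - 1) * (b * √(c / 2) * exp (-(1 / 2))) <
      a * M * (b / a * √(c / 2) * exp (-(1 / 2))) := by
    field_simp
    nlinarith [show 0 < b * √(c / 2) * exp (-(1 / 2)) by positivity]
  obtain ⟨k, hk⟩ := exists_le_of_le_one_sub_mul_add (u := fun k ↦ ‖x k i - swarmCenter (x 0)‖)
    (by positivity) hp (fun _ ↦ norm_nonneg _) hrec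
  exact ⟨k, by simpa [swarmCenter] using hk⟩

/-- dimension independence of the cohesion radius: for every
dimension `n ≥ 1` and every number of members `M ≥ 2`, under Assumption 1
(pairwise distances always exceed `δ = √(c·ln(b/a))`) and the coefficient
condition `a − (a²+b²Φ²)M²/(2(M−1)) > 0` with `Φ = a/b`, every trajectory of
the swarm model satisfies: for each `i` there is a time `k` with
`‖x_i(k) − x̄‖ ≤ (b/a)·√(c/2)·exp(−1/2)` — a bound depending only on the model
parameters `a, b, c`. -/
theorem cohesion_radius_dimension_independent (a b c : ℝ)
    (ha : 0 < a) (hb : 0 < b) (hc : 0 < c) (hba : a < b) :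
    ∀ n : ℕ, 1 ≤ n → ∀ M : ℕ, 2 ≤ M →
    ∀ x : ℕ → Fin M → EuclideanSpace ℝ (Fin n),
    (∀ k i, x (k + 1) i =
      x k i + ∑ j ∈ Finset.univ.erase i, g a b c (x k i - x k j)) →
    (∀ (k : ℕ) (i j : Fin M), i ≠ j →
      Real.sqrt (c * Real.log (b / a)) < ‖x k i - x k j‖) →
    0 < a - (a ^ 2 + b ^ 2 * (a / b) ^ 2) * (M : ℝ) ^ 2 / (2 * ((M : ℝ) - 1)) →
    ∀ i : Fin M, ∃ k : ℕ,
      ‖x k i - (M : ℝ)⁻¹ • ∑ j, x 0 j‖ ≤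
        b / a * Real.sqrt (c / 2) * Real.exp (-(1 / 2 : ℝ)) :=
  cohesion_radius_dimension_independent_general a b c ha hb hc
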